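/- arXiv:2511.04363 — 2 statements merged into one kernel-verified Lean document; each statement's English description precedes it below -/
import Mathlib

section
/- For every κ∈(0,1), the function G_κ is a strictly increasing bijection of [1,∞) onto [0,∞); its inverse H_κ : [0,∞) → [1,∞) is infinitely differentiable and satisfies: (i) (H_κ(x) − 1 − x²/(2(1−κ)²))·(1−κ)²/x² → 0 as x → 0⁺; (ii) there exists a constant C_κ > 0 such that |H_κ(x) − x − κ·ln x − κ²·(ln x)/x| ≤ C_κ for all x ≥ 2. -/
/-!
Substituting `y = cosh s` turns `G_κ` into the hyperbolic Kepler function `s ↦ sinh s - κ s`,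
whose derivative `cosh s - κ` is positive for `κ < 1`; hence `H_κ = cosh ∘ ψ`, where `ψ` is the
smooth inverse of that function. Near `0`, `ψ x ~ x / (1 - κ)` and `cosh ψ - 1 = 2 sinh² (ψ / 2)`.
For large `x`, `H_κ x - x = e^{-ψ x} + κ ψ x` and `ψ x = log x + O(1)`, because
`(1 - κ) e^{ψ x} / 3 ≤ x ≤ e^{ψ x}`; the term `κ² log x / x` is itself bounded.
-/

noncomputable section

open Real MeasureTheory Set Filter

/-- Japanese bracket `⟨x⟩ := √(2+x²)`. -/
def jb (x : ℝ) : ℝ := Real.sqrt (2 + x ^ 2)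

/-- `κ(a,ℓ) := (1 + 4a²ℓ/m²)^{-1/2}`. -/
def kpa (m a ℓ : ℝ) : ℝ := 1 / Real.sqrt (1 + 4 * a ^ 2 * ℓ / m ^ 2)

/-- `p(a,ℓ) := m / (2a²κ(a,ℓ))`. -/
def pfn (m a ℓ : ℝ) : ℝ := m / (2 * a ^ 2 * kpa m a ℓ)

/-- `r₀(a,ℓ) := p(a,ℓ)(1-κ(a,ℓ))`. -/
def rZero (m a ℓ : ℝ) : ℝ := pfn m a ℓ * (1 - kpa m a ℓ)

/-- `G_κ(y) := √(y²-1) - κ ln(y + √(y²-1))`. -/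
def Gf (κ y : ℝ) : ℝ := Real.sqrt (y ^ 2 - 1) - κ * Real.log (y + Real.sqrt (y ^ 2 - 1))

/-- `H_κ : [0,∞) → [1,∞)`, the inverse of `G_κ` on `[1,∞)`. -/
def Hf (κ x : ℝ) : ℝ := Function.invFunOn (Gf κ) (Set.Ici 1) x

/-- Inverse hyperbolic cosine `arcosh x = ln (x + √(x²-1))`. -/
def acosh (x : ℝ) : ℝ := Real.log (x + Real.sqrt (x ^ 2 - 1))

/-- The radial function `R(θ,a,ℓ)`. -/
def Rf (m θ a ℓ : ℝ) : ℝ :=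
  pfn m a ℓ * Hf (kpa m a ℓ) (|θ| / pfn m a ℓ) - pfn m a ℓ * kpa m a ℓ

/-- The radial velocity `V(θ,a,ℓ)`. -/
def Vf (m θ a ℓ : ℝ) : ℝ :=
  Real.sign θ * a *
    Real.sqrt (1 + m / (a ^ 2 * Rf m θ a ℓ) - ℓ / (a ^ 2 * (Rf m θ a ℓ) ^ 2))

/-- The dynamical radial function `R̃(t,θ,a,ℓ) = R(θ+at,a,ℓ)`. -/
def Rtil (m t θ a ℓ : ℝ) : ℝ := Rf m (θ + a * t) a ℓ

/-- The action `𝒜(r,v,ℓ) = √(v² - m/r + ℓ/r²)`. -/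
def Acal (m r v ℓ : ℝ) : ℝ := Real.sqrt (v ^ 2 - m / r + ℓ / r ^ 2)

/-- The angle `Θ(r,v,ℓ) = sgn(v)·p(𝒜,ℓ)·G_{κ(𝒜,ℓ)}(r/p(𝒜,ℓ) + κ(𝒜,ℓ))`. -/
def Theta (m r v ℓ : ℝ) : ℝ :=
  Real.sign v * pfn m (Acal m r v ℓ) ℓ *
    Gf (kpa m (Acal m r v ℓ) ℓ) (r / pfn m (Acal m r v ℓ) ℓ + kpa m (Acal m r v ℓ) ℓ)

/-- The phase space `ℝ×(0,∞)×(0,∞)` in the variables `(θ,a,ℓ)`. -/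
def phaseSet : Set (ℝ × ℝ × ℝ) := Set.univ ×ˢ Set.Ioi 0 ×ˢ Set.Ioi 0

/-- The gravitational field
`F(t,r) = -(1/r²)·∫∫∫ 1_{R(θ+ta,a,ℓ) ≤ r} γ(θ,a,ℓ)² dθ da dℓ`. -/
def gravF (m : ℝ) (γ : ℝ × ℝ × ℝ → ℝ) (t r : ℝ) : ℝ :=
  -(1 / r ^ 2) *
    (∫⁻ x in {x : ℝ × ℝ × ℝ | Rf m (x.1 + t * x.2.1) x.2.1 x.2.2 ≤ r},
        ENNReal.ofReal ((γ x) ^ 2) ∂(volume.restrict phaseSet)).toReal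

/-- The effective gravitational field
`F_eff(t,r) = -(1/r²)·∫∫∫ 1_{at ≤ r} γ(θ,a,ℓ)² dθ da dℓ`. -/
def gravFeff (γ : ℝ × ℝ × ℝ → ℝ) (t r : ℝ) : ℝ :=
  -(1 / r ^ 2) *
    (∫⁻ x in {x : ℝ × ℝ × ℝ | x.2.1 * t ≤ r},
        ENNReal.ofReal ((γ x) ^ 2) ∂(volume.restrict phaseSet)).toReal

/-- `G_κ (cosh s) = sinh s - κ s`: a hyperbolic Kepler equation. -/
def hypKepler (κ s : ℝ) : ℝ := sinh s - κ * s

lemma hasDerivAt_hypKepler (κ s : ℝ) : HasDerivAt (hypKepler κ) (cosh s - κ) s :=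
  ((hasDerivAt_sinh s).sub ((hasDerivAt_id s).const_mul κ)).congr_deriv (by simp)

lemma contDiff_hypKepler (κ : ℝ) {n : WithTop ℕ∞} : ContDiff ℝ n (hypKepler κ) :=
  contDiff_sinh.sub (contDiff_const.mul contDiff_id)

lemma hypKepler_zero (κ : ℝ) : hypKepler κ 0 = 0 := by simp [hypKepler]

section HypKepler

variable {κ : ℝ}

lemma cosh_sub_pos (hκ : κ < 1) (s : ℝ) : 0 < cosh s - κ := by
  linarith [one_le_cosh s]

lemma strictMono_hypKepler (hκ : κ < 1) : StrictMono (hypKepler κ) :=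
  strictMono_of_hasDerivAt_pos (hasDerivAt_hypKepler κ) (cosh_sub_pos hκ)

lemma surjective_hypKepler (hκ : κ < 1) : Function.Surjective (hypKepler κ) := by
  have h1κ : 0 < 1 - κ := by linarith
  refine (contDiff_hypKepler κ (n := 0)).continuous.surjective ?_ ?_
  · refine tendsto_atTop_mono' atTop ?_ (tendsto_id.const_mul_atTop h1κ)
    filter_upwards [eventually_ge_atTop 0] with s hs
    have := self_le_sinh_iff.mpr hs
    simp only [hypKepler, id]
    linarith
  · refine tendsto_atBot_mono' atBot ?_ (tendsto_id.const_mul_atBot h1κ)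
    filter_upwards [eventually_le_atBot 0] with s hs
    have := sinh_le_self_iff.mpr hs
    simp only [hypKepler, id]
    linarith

def hypKeplerHomeomorph (hκ : κ < 1) : ℝ ≃ₜ ℝ :=
  (StrictMono.orderIsoOfSurjective _ (strictMono_hypKepler hκ)
    (surjective_hypKepler hκ)).toHomeomorph

def hypKeplerInv (hκ : κ < 1) : ℝ → ℝ := (hypKeplerHomeomorph hκ).symm

variable (hκ : κ < 1)
include hκ

lemma hypKepler_hypKeplerInv (x : ℝ) : hypKepler κ (hypKeplerInv hκ x) = x :=
  (hypKeplerHomeomorph hκ).apply_symm_apply x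

lemma hypKeplerInv_hypKepler (s : ℝ) : hypKeplerInv hκ (hypKepler κ s) = s :=
  (hypKeplerHomeomorph hκ).symm_apply_apply s

lemma hypKeplerInv_zero : hypKeplerInv hκ 0 = 0 := by
  simpa [hypKepler_zero] using hypKeplerInv_hypKepler hκ 0

lemma hypKeplerInv_nonneg {x : ℝ} (hx : 0 ≤ x) : 0 ≤ hypKeplerInv hκ x := by
  rwa [← (strictMono_hypKepler hκ).le_iff_le, hypKepler_zero, hypKepler_hypKeplerInv]

lemma contDiff_hypKeplerInv {n : WithTop ℕ∞} : ContDiff ℝ n (hypKeplerInv hκ) :=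
  (hypKeplerHomeomorph hκ).contDiff_symm_deriv (fun s => (cosh_sub_pos hκ s).ne')
    (hasDerivAt_hypKepler κ) (contDiff_hypKepler κ)

lemma hasDerivAt_hypKeplerInv_zero : HasDerivAt (hypKeplerInv hκ) (1 - κ)⁻¹ 0 := by
  have h := HasDerivAt.of_local_left_inverse (a := 0)
    (contDiff_hypKeplerInv hκ (n := 0)).continuous.continuousAt
    (hasDerivAt_hypKepler κ _) (cosh_sub_pos hκ _).ne'
    (Eventually.of_forall (hypKepler_hypKeplerInv hκ))
  simpa [hypKeplerInv_zero hκ] using h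

end HypKepler

lemma Gf_eq_hypKepler_arcosh (κ : ℝ) {y : ℝ} (hy : 1 ≤ y) : Gf κ y = hypKepler κ (arcosh y) := by
  rw [hypKepler, sinh_arcosh hy, arcosh, Gf]

lemma Gf_cosh (κ : ℝ) {s : ℝ} (hs : 0 ≤ s) : Gf κ (cosh s) = hypKepler κ s := by
  rw [Gf_eq_hypKepler_arcosh κ (one_le_cosh s), arcosh_cosh hs]

section Gf

variable {κ : ℝ} (hκ : κ < 1)
include hκ

lemma strictMonoOn_Gf : StrictMonoOn (Gf κ) (Ici 1) := by
  intro y hy z hz hyz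
  rw [Gf_eq_hypKepler_arcosh κ hy, Gf_eq_hypKepler_arcosh κ hz]
  refine strictMono_hypKepler hκ ?_
  exact strictMonoOn_arcosh (mem_Ioi.mpr (zero_lt_one.trans_le hy))
    (mem_Ioi.mpr (zero_lt_one.trans_le hz)) hyz

lemma Gf_cosh_hypKeplerInv {x : ℝ} (hx : 0 ≤ x) : Gf κ (cosh (hypKeplerInv hκ x)) = x := by
  rw [Gf_cosh κ (hypKeplerInv_nonneg hκ hx), hypKepler_hypKeplerInv]

lemma bijOn_Gf : BijOn (Gf κ) (Ici 1) (Ici 0) := by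
  refine ⟨fun y hy => ?_, (strictMonoOn_Gf hκ).injOn, fun x hx =>
    ⟨cosh (hypKeplerInv hκ x), one_le_cosh _, Gf_cosh_hypKeplerInv hκ hx⟩⟩
  rw [mem_Ici, Gf_eq_hypKepler_arcosh κ hy, ← hypKepler_zero κ]
  exact (strictMono_hypKepler hκ).monotone (arcosh_nonneg hy)

lemma Hf_eq_cosh_hypKeplerInv {x : ℝ} (hx : 0 ≤ x) : Hf κ x = cosh (hypKeplerInv hκ x) := by
  conv_lhs => rw [← Gf_cosh_hypKeplerInv hκ hx]
  exact (bijOn_Gf hκ).invOn_invFunOn.1 (one_le_cosh _)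

lemma contDiffOn_Hf {n : WithTop ℕ∞} : ContDiffOn ℝ n (Hf κ) (Ici 0) :=
  (contDiff_cosh.comp (contDiff_hypKeplerInv hκ)).contDiffOn.congr
    fun _ hx => Hf_eq_cosh_hypKeplerInv hκ hx

end Gf

open Topology

lemma cosh_eq_two_mul_sinh_half_sq_add_one (s : ℝ) : cosh s = 2 * sinh (s / 2) ^ 2 + 1 := by
  have h := cosh_two_mul (s / 2)
  rw [mul_div_cancel₀ s two_ne_zero, cosh_sq] at h
  linarith

lemma tendsto_Hf_nhdsGT_zero {κ : ℝ} (hκ : κ < 1) :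
    Tendsto (fun x : ℝ => (Hf κ x - 1 - x ^ 2 / (2 * (1 - κ) ^ 2)) * (1 - κ) ^ 2 / x ^ 2)
      (𝓝[>] 0) (𝓝 0) := by
  have h1κ : 1 - κ ≠ 0 := by linarith
  set g : ℝ → ℝ := fun x => sinh (hypKeplerInv hκ x / 2)
  have hg : HasDerivAt g ((1 - κ)⁻¹ / 2) 0 :=
    ((hasDerivAt_sinh _).comp 0 ((hasDerivAt_hypKeplerInv_zero hκ).div_const 2)).congr_deriv
      (by simp [hypKeplerInv_zero hκ])
  have hslope : Tendsto (fun x => g x / x) (𝓝[>] 0) (𝓝 ((1 - κ)⁻¹ / 2)) := by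
    refine ((hasDerivAt_iff_tendsto_slope.mp hg).mono_left (nhdsGT_le_nhdsNE 0)).congr fun x => ?_
    simp [slope_def_field, g, hypKeplerInv_zero hκ]
  have hlim : Tendsto (fun x => 2 * (1 - κ) ^ 2 * (g x / x) ^ 2 - 1 / 2) (𝓝[>] 0) (𝓝 0) := by
    convert ((hslope.pow 2).const_mul (2 * (1 - κ) ^ 2)).sub_const (1 / 2) using 2
    field_simp
    ring
  refine hlim.congr' ?_
  filter_upwards [self_mem_nhdsWithin] with x (hx : 0 < x)
  rw [Hf_eq_cosh_hypKeplerInv hκ hx.le, cosh_eq_two_mul_sinh_half_sq_add_one]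
  field_simp
  ring

section Asymptotics

variable {κ : ℝ} (hκ₀ : 0 ≤ κ) (hκ : κ < 1)
include hκ₀

lemma hypKepler_le_exp {s : ℝ} (hs : 0 ≤ s) : hypKepler κ s ≤ exp s := by
  have := sinh_add_cosh s
  have := cosh_pos s
  have := mul_nonneg hκ₀ hs
  rw [hypKepler]
  linarith

include hκ

lemma one_sub_mul_exp_le_hypKepler {s : ℝ} (hs : 0 ≤ s) (h : 1 - κ ≤ hypKepler κ s) :
    (1 - κ) * exp s ≤ 3 * hypKepler κ s := by
  have hsinh : (1 - κ) * sinh s ≤ hypKepler κ s := by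
    have := mul_le_mul_of_nonneg_left (self_le_sinh_iff.mpr hs) hκ₀
    rw [hypKepler]
    linarith
  have hexp : exp s ≤ 2 * sinh s + 1 := by
    have := exp_le_one_iff.mpr (neg_nonpos.mpr hs)
    have := sinh_add_cosh s
    have := cosh_sub_sinh s
    linarith
  nlinarith

lemma abs_Hf_sub_le {x : ℝ} (hx : 1 ≤ x) :
    |Hf κ x - x - κ * log x - κ ^ 2 * log x / x| ≤ 1 + log 3 - log (1 - κ) := by
  have hx₀ : 0 < x := zero_lt_one.trans_le hx
  set s := hypKeplerInv hκ x
  have hs : 0 ≤ s := hypKeplerInv_nonneg hκ hx₀.le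
  have hsx : hypKepler κ s = x := hypKepler_hypKeplerInv hκ x
  have hHf : Hf κ x - x = exp (-s) + κ * s := by
    have hsx' : sinh s - κ * s = x := hsx
    have := cosh_sub_sinh s
    rw [Hf_eq_cosh_hypKeplerInv hκ hx₀.le]
    linarith
  have hlog_le : log x ≤ s := by
    rw [log_le_iff_le_exp hx₀, ← hsx]
    exact hypKepler_le_exp hκ₀ hs
  have hle_log : s ≤ log x + log 3 - log (1 - κ) := by
    have h := log_le_log (by have := exp_pos s; nlinarith)
      (one_sub_mul_exp_le_hypKepler hκ₀ hκ hs (by linarith))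
    rw [log_mul (by linarith) (exp_pos s).ne', log_exp, log_mul (by norm_num) (by linarith), hsx]
      at h
    linarith
  have hexp : exp (-s) ≤ 1 := exp_le_one_iff.mpr (neg_nonpos.mpr hs)
  have hratio₀ : 0 ≤ log x / x := div_nonneg (log_nonneg hx) hx₀.le
  have hratio₁ : log x / x ≤ 1 := (div_le_one hx₀).mpr (by linarith [log_le_sub_one_of_pos hx₀])
  have hrw : Hf κ x - x - κ * log x - κ ^ 2 * log x / x
      = exp (-s) + κ * (s - log x) - κ ^ 2 * (log x / x) := by
    linear_combination hHf
  rw [hrw, abs_le]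
  constructor <;> nlinarith [exp_pos (-s), mul_le_mul_of_nonneg_left hratio₁ (sq_nonneg κ)]

end Asymptotics

/-- `G_κ` is a strictly increasing bijection of `[1,∞)` onto `[0,∞)`; its inverse
`H_κ` is smooth and has the stated asymptotics at `0⁺` and at `∞`. -/
theorem statement4 (κ : ℝ) (hκ : κ ∈ Set.Ioo (0 : ℝ) 1) :
    StrictMonoOn (Gf κ) (Set.Ici 1) ∧
    Set.BijOn (Gf κ) (Set.Ici 1) (Set.Ici 0) ∧
    (∀ n : ℕ, ContDiffOn ℝ n (Hf κ) (Set.Ici 0)) ∧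
    Filter.Tendsto
      (fun x : ℝ => (Hf κ x - 1 - x ^ 2 / (2 * (1 - κ) ^ 2)) * (1 - κ) ^ 2 / x ^ 2)
      (nhdsWithin 0 (Set.Ioi 0)) (nhds 0) ∧
    ∃ Cκ : ℝ, 0 < Cκ ∧ ∀ x : ℝ, 2 ≤ x →
      |Hf κ x - x - κ * Real.log x - κ ^ 2 * Real.log x / x| ≤ Cκ := by
  obtain ⟨hκ₀, hκ₁⟩ := hκ
  refine ⟨strictMonoOn_Gf hκ₁, bijOn_Gf hκ₁, fun n => contDiffOn_Hf hκ₁,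
    tendsto_Hf_nhdsGT_zero hκ₁, 1 + log 3 - log (1 - κ), ?_,
    fun x hx => abs_Hf_sub_le hκ₀.le hκ₁ (by linarith)⟩
  have := log_neg (by linarith : 0 < 1 - κ) (by linarith)
  have := log_pos (by norm_num : (1 : ℝ) < 3)
  linarith
end
end

section
/- For all a>0, ℓ>0 the partial derivatives in a satisfy the identities ∂ₐp(a,ℓ) = −p(a,ℓ)(1+κ(a,ℓ)²)/a, ∂ₐκ(a,ℓ) = −4aℓκ(a,ℓ)³/m², and ∂ₐ(p·κ)(a,ℓ) = −m/a³. Moreover, for all θ∈ℝ one has ∂_θR(θ,a,ℓ) = V(θ,a,ℓ)/a, and for θ ≠ 0 (writing R = R(θ,a,ℓ), p = p(a,ℓ), κ = κ(a,ℓ)): ∂_θR = sgn(θ)·(p/R)·√((R/p+κ)² − 1) and ∂ₐR = ∂ₐp·[R/p + κ − (θ/p)·∂_θR] + p·∂ₐκ·arcosh(R/p+κ)·sgn(θ)·∂_θR + m/a³. -/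
noncomputable section

open Real MeasureTheory Set Filter

section helper

lemma Gf_one (κ : ℝ) : Gf κ 1 = 0 := by simp [Gf]

-- log (y + √(y²-1)) ≤ √(y²-1) for y ≥ 1
lemma log_le_sqrt {y : ℝ} (hy : 1 ≤ y) :
    Real.log (y + Real.sqrt (y ^ 2 - 1)) ≤ Real.sqrt (y ^ 2 - 1) := by
  set s := Real.sqrt (y ^ 2 - 1) with hs
  have hs0 : 0 ≤ s := Real.sqrt_nonneg _
  have hy0 : (0:ℝ) < y := lt_of_lt_of_le one_pos hy
  have hsq : s ^ 2 = y ^ 2 - 1 := Real.sq_sqrt (by nlinarith)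
  have hsinh : s ≤ Real.sinh s := Real.self_le_sinh_iff.2 hs0
  rw [Real.sinh_eq] at hsinh
  have hys : y + s ≤ Real.exp s := by
    have he : Real.exp (-s) = (Real.exp s)⁻¹ := Real.exp_neg s
    have hen : Real.exp s * (Real.exp s)⁻¹ = 1 := mul_inv_cancel₀ (Real.exp_pos s).ne'
    have h1 : 2 * s * Real.exp s ≤ Real.exp s ^ 2 - 1 := by
      have := mul_le_mul_of_nonneg_right hsinh (Real.exp_pos s).le
      rw [he] at this; nlinarith
    have h2 : y ^ 2 ≤ (Real.exp s - s) ^ 2 := by nlinarith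
    have h3 : (1:ℝ) ≤ Real.exp s - s := by nlinarith [Real.add_one_le_exp s]
    nlinarith
  calc Real.log (y + s) ≤ Real.log (Real.exp s) :=
        Real.log_le_log (by positivity) hys
    _ = s := Real.log_exp s

lemma Gf_lower {κ y : ℝ} (hκ0 : 0 ≤ κ) (hκ1 : κ ≤ 1) (hy : 1 ≤ y) :
    (1 - κ) * Real.sqrt (y ^ 2 - 1) ≤ Gf κ y := by
  have h := log_le_sqrt hy
  have h2 : κ * Real.log (y + Real.sqrt (y ^ 2 - 1)) ≤ κ * Real.sqrt (y ^ 2 - 1) :=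
    mul_le_mul_of_nonneg_left h hκ0
  simp only [Gf]; nlinarith

lemma sqrt_sub_one_pos {y : ℝ} (hy : 1 < y) : 0 < Real.sqrt (y ^ 2 - 1) :=
  Real.sqrt_pos.2 (by nlinarith)

lemma hasDerivAt_Gf {κ y : ℝ} (hy : 1 < y) :
    HasDerivAt (Gf κ) ((y - κ) / Real.sqrt (y ^ 2 - 1)) y := by
  have hy2 : (0:ℝ) < y ^ 2 - 1 := by nlinarith
  have hs : 0 < Real.sqrt (y ^ 2 - 1) := Real.sqrt_pos.2 hy2
  have hsq : Real.sqrt (y ^ 2 - 1) ^ 2 = y ^ 2 - 1 := Real.sq_sqrt hy2.le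
  have h1 : HasDerivAt (fun y : ℝ => y ^ 2 - 1) (2 * y) y := by
    simpa using ((hasDerivAt_pow 2 y).sub_const 1)
  have h2 : HasDerivAt (fun y : ℝ => Real.sqrt (y ^ 2 - 1))
      (2 * y / (2 * Real.sqrt (y ^ 2 - 1))) y :=
    (Real.hasDerivAt_sqrt hy2.ne').comp y h1 |>.congr_deriv (by ring)
  have h3 : HasDerivAt (fun y : ℝ => y + Real.sqrt (y ^ 2 - 1))
      (1 + 2 * y / (2 * Real.sqrt (y ^ 2 - 1))) y := (hasDerivAt_id y).add h2
  have hpos : 0 < y + Real.sqrt (y ^ 2 - 1) := by positivity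
  have h4 : HasDerivAt (fun y : ℝ => Real.log (y + Real.sqrt (y ^ 2 - 1)))
      ((y + Real.sqrt (y ^ 2 - 1))⁻¹ * (1 + 2 * y / (2 * Real.sqrt (y ^ 2 - 1)))) y :=
    by have h := (Real.hasDerivAt_log hpos.ne').comp y h3; exact h
  have h5 := h2.sub (h4.const_mul κ)
  refine h5.congr_deriv ?_
  field_simp
  ring_nf
lemma Gf_continuousOn (κ : ℝ) : ContinuousOn (Gf κ) (Ici 1) := by
  have hc : ContinuousOn (fun y : ℝ => Real.sqrt (y ^ 2 - 1)) (Ici 1) :=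
    (continuous_sqrt.comp (by continuity)).continuousOn
  apply hc.sub
  apply ContinuousOn.mul continuousOn_const
  apply ContinuousOn.log (continuousOn_id.add hc)
  intro y hy
  have : (0:ℝ) < y := lt_of_lt_of_le one_pos hy
  have h2 := Real.sqrt_nonneg (y ^ 2 - 1)
  show id y + Real.sqrt (y ^ 2 - 1) ≠ 0
  simp only [id]
  positivity

lemma Gf_strictMonoOn {κ : ℝ} (hκ1 : κ < 1) : StrictMonoOn (Gf κ) (Ici 1) := by
  apply strictMonoOn_of_deriv_pos (convex_Ici 1) (Gf_continuousOn κ)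
  intro y hy
  rw [interior_Ici] at hy
  rw [(hasDerivAt_Gf hy).deriv]
  have := sqrt_sub_one_pos hy
  have h2 : (0:ℝ) < y - κ := by linarith [le_of_lt (show (1:ℝ) < y from hy)]
  positivity

lemma Gf_nonneg {κ y : ℝ} (hκ0 : 0 ≤ κ) (hκ1 : κ ≤ 1) (hy : 1 ≤ y) : 0 ≤ Gf κ y :=
  le_trans (mul_nonneg (by linarith) (Real.sqrt_nonneg _)) (Gf_lower hκ0 hκ1 hy)

lemma Gf_surj {κ x : ℝ} (hκ0 : 0 ≤ κ) (hκ1 : κ < 1) (hx : 0 ≤ x) :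
    ∃ y ∈ Ici (1:ℝ), Gf κ y = x := by
  set Y : ℝ := Real.sqrt (1 + (x / (1 - κ)) ^ 2) with hY
  have h1κ : (0:ℝ) < 1 - κ := by linarith
  have hY1 : 1 ≤ Y := by
    rw [hY]
    nlinarith [Real.sq_sqrt (show (0:ℝ) ≤ 1 + (x / (1 - κ)) ^ 2 by positivity),
      Real.sqrt_nonneg (1 + (x / (1 - κ)) ^ 2)]
  have hYsq : Y ^ 2 - 1 = (x / (1 - κ)) ^ 2 := by
    rw [hY, Real.sq_sqrt (by positivity)]; ring
  have hGY : x ≤ Gf κ Y := by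
    have := Gf_lower hκ0 hκ1.le hY1
    rw [hYsq, Real.sqrt_sq (by positivity)] at this
    calc x = (1 - κ) * (x / (1 - κ)) := by field_simp
    _ ≤ Gf κ Y := this
  have := intermediate_value_Icc hY1 ((Gf_continuousOn κ).mono Icc_subset_Ici_self)
  have hmem : x ∈ Icc (Gf κ 1) (Gf κ Y) := by
    rw [Gf_one]; exact ⟨hx, hGY⟩
  obtain ⟨y, hy, hyx⟩ := this hmem
  exact ⟨y, Icc_subset_Ici_self hy, hyx⟩

lemma Hf_mem {κ x : ℝ} (hκ0 : 0 ≤ κ) (hκ1 : κ < 1) (hx : 0 ≤ x) : 1 ≤ Hf κ x :=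
  Function.invFunOn_mem (Gf_surj hκ0 hκ1 hx)

lemma Gf_Hf {κ x : ℝ} (hκ0 : 0 ≤ κ) (hκ1 : κ < 1) (hx : 0 ≤ x) : Gf κ (Hf κ x) = x :=
  Function.invFunOn_eq (Gf_surj hκ0 hκ1 hx)

lemma Hf_Gf {κ y : ℝ} (hκ1 : κ < 1) (hy : 1 ≤ y) : Hf κ (Gf κ y) = y :=
  ((Gf_strictMonoOn hκ1).injOn).leftInvOn_invFunOn hy

lemma Hf_zero {κ : ℝ} (hκ1 : κ < 1) : Hf κ 0 = 1 := by
  have := Hf_Gf hκ1 (le_refl 1); rwa [Gf_one] at this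

lemma Hf_lt_one_gap {κ x : ℝ} (hκ0 : 0 ≤ κ) (hκ1 : κ < 1) (hx : 0 ≤ x) :
    Hf κ x - 1 ≤ (x / (1 - κ)) ^ 2 := by
  have h1κ : (0:ℝ) < 1 - κ := by linarith
  have hH := Hf_mem hκ0 hκ1 hx
  have hlow := Gf_lower hκ0 hκ1.le hH
  rw [Gf_Hf hκ0 hκ1 hx] at hlow
  -- (1-κ) √(H²-1) ≤ x, and H - 1 ≤ H² - 1
  have h1 : Real.sqrt (Hf κ x - 1) ≤ Real.sqrt (Hf κ x ^ 2 - 1) :=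
    Real.sqrt_le_sqrt (by nlinarith)
  have h2 : Real.sqrt (Hf κ x - 1) ≤ x / (1 - κ) := by
    rw [le_div_iff₀ h1κ]; nlinarith [Real.sqrt_nonneg (Hf κ x - 1)]
  have h3 := Real.sq_sqrt (show (0:ℝ) ≤ Hf κ x - 1 by linarith)
  nlinarith [Real.sqrt_nonneg (Hf κ x - 1)]

lemma Hf_gt_one {κ x : ℝ} (hκ0 : 0 ≤ κ) (hκ1 : κ < 1) (hx : 0 < x) : 1 < Hf κ x := by
  rcases lt_or_eq_of_le (Hf_mem hκ0 hκ1 hx.le) with h | h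
  · exact h
  · exfalso
    have := Gf_Hf hκ0 hκ1 hx.le
    rw [← h, Gf_one] at this; linarith

section basics
variable {m a ℓ : ℝ} (hm : 0 < m) (ha : 0 < a) (hℓ : 0 < ℓ)

lemma q_gt_one (hm : 0 < m) (ha : a ≠ 0) (hℓ : 0 < ℓ) : 1 < 1 + 4 * a ^ 2 * ℓ / m ^ 2 := by
  have : 0 < 4 * a ^ 2 * ℓ / m ^ 2 := by positivity
  linarith

lemma q_pos (hm : 0 < m) (hℓ : 0 < ℓ) : 0 < 1 + 4 * a ^ 2 * ℓ / m ^ 2 := by positivity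

lemma kpa_pos (hm : 0 < m) (hℓ : 0 < ℓ) : 0 < kpa m a ℓ := by
  have := q_pos (a := a) hm hℓ
  have : 0 < Real.sqrt (1 + 4 * a ^ 2 * ℓ / m ^ 2) := Real.sqrt_pos.2 this
  simpa [kpa] using this

lemma kpa_lt_one (hm : 0 < m) (ha : a ≠ 0) (hℓ : 0 < ℓ) : kpa m a ℓ < 1 := by
  have h1 := q_gt_one (a := a) hm ha hℓ
  have h2 : 1 < Real.sqrt (1 + 4 * a ^ 2 * ℓ / m ^ 2) := by
    nlinarith [Real.sq_sqrt (by linarith : (0:ℝ) ≤ 1 + 4 * a ^ 2 * ℓ / m ^ 2),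
      Real.sqrt_nonneg (1 + 4 * a ^ 2 * ℓ / m ^ 2)]
  rw [kpa, div_lt_one (by linarith)]; exact h2

lemma kpa_sq (hm : 0 < m) (hℓ : 0 < ℓ) :
    kpa m a ℓ ^ 2 = 1 / (1 + 4 * a ^ 2 * ℓ / m ^ 2) := by
  rw [kpa, div_pow, one_pow, Real.sq_sqrt (q_pos hm hℓ).le]

lemma pfn_pos (hm : 0 < m) (ha : 0 < a) (hℓ : 0 < ℓ) : 0 < pfn m a ℓ := by
  have := kpa_pos (a := a) hm hℓ
  rw [pfn]; positivity

lemma pfn_mul_kpa (hm : 0 < m) (ha : a ≠ 0) (hℓ : 0 < ℓ) :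
    pfn m a ℓ * kpa m a ℓ = m / (2 * a ^ 2) := by
  have hk := (kpa_pos (a := a) hm hℓ).ne'
  rw [pfn]; field_simp

lemma ell_eq (hm : 0 < m) (ha : 0 < a) (hℓ : 0 < ℓ) :
    ℓ = a ^ 2 * pfn m a ℓ ^ 2 * (1 - kpa m a ℓ ^ 2) := by
  have hk := (kpa_pos (a := a) hm hℓ).ne'
  have hq := (q_pos (a := a) hm hℓ).ne'
  have hpk := pfn_mul_kpa hm ha.ne' hℓ
  have h1 : pfn m a ℓ ^ 2 * kpa m a ℓ ^ 2 = (m / (2 * a ^ 2)) ^ 2 := by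
    rw [← mul_pow, hpk]
  rw [kpa_sq hm hℓ] at h1 ⊢
  have h2 : pfn m a ℓ ^ 2 = (m / (2 * a ^ 2)) ^ 2 * (1 + 4 * a ^ 2 * ℓ / m ^ 2) := by
    field_simp at h1 ⊢; linarith
  rw [h2]
  field_simp
  ring

lemma m_eq (hm : 0 < m) (ha : 0 < a) (hℓ : 0 < ℓ) :
    m = 2 * a ^ 2 * pfn m a ℓ * kpa m a ℓ := by
  have h : 2 * a ^ 2 * pfn m a ℓ * kpa m a ℓ = 2 * a ^ 2 * (pfn m a ℓ * kpa m a ℓ) := by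
    ring
  rw [h, pfn_mul_kpa hm ha.ne' hℓ]
  field_simp

lemma hasDerivAt_kpa (hm : 0 < m) (hℓ : 0 < ℓ) (a : ℝ) :
    HasDerivAt (fun a' => kpa m a' ℓ) (-4 * a * ℓ * kpa m a ℓ ^ 3 / m ^ 2) a := by
  have hq : 0 < 1 + 4 * a ^ 2 * ℓ / m ^ 2 := q_pos hm hℓ
  have hs : 0 < Real.sqrt (1 + 4 * a ^ 2 * ℓ / m ^ 2) := Real.sqrt_pos.2 hq
  have h1 : HasDerivAt (fun a' : ℝ => 1 + 4 * a' ^ 2 * ℓ / m ^ 2)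
      (8 * a * ℓ / m ^ 2) a := by
    have : HasDerivAt (fun a' : ℝ => a' ^ 2) (2 * a) a := by
      simpa using hasDerivAt_pow 2 a
    simpa using (((this.const_mul 4).mul_const ℓ).div_const (m ^ 2)).const_add 1
      |>.congr_deriv (by ring)
  have h2 := (Real.hasDerivAt_sqrt hq.ne').comp a h1
  have h3 := h2.inv hs.ne'
  have : (fun a' => kpa m a' ℓ) = fun a' =>
      (Real.sqrt (1 + 4 * a' ^ 2 * ℓ / m ^ 2))⁻¹ := by
    funext a'; rw [kpa, one_div]
  rw [this]
  refine h3.congr_deriv ?_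
  rw [kpa]
  set s := Real.sqrt (1 + 4 * a ^ 2 * ℓ / m ^ 2) with hsdef
  have hsne : s ≠ 0 := hs.ne'
  have hmne : m ≠ 0 := hm.ne'
  simp only [Function.comp, ← hsdef]
  field_simp
  ring

lemma hasDerivAt_pfn (hm : 0 < m) (hℓ : 0 < ℓ) (ha : 0 < a) :
    HasDerivAt (fun a' => pfn m a' ℓ) (-pfn m a ℓ * (1 + kpa m a ℓ ^ 2) / a) a := by
  have hk := kpa_pos (a := a) hm hℓ
  have hκ := hasDerivAt_kpa hm hℓ a
  have hden : HasDerivAt (fun a' : ℝ => 2 * a' ^ 2 * kpa m a' ℓ)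
      (4 * a * kpa m a ℓ + 2 * a ^ 2 * (-4 * a * ℓ * kpa m a ℓ ^ 3 / m ^ 2)) a := by
    have h1 : HasDerivAt (fun a' : ℝ => 2 * a' ^ 2) (4 * a) a := by
      simpa using ((hasDerivAt_pow 2 a).const_mul 2).congr_deriv (by ring)
    exact h1.mul hκ
  have hdenne : 2 * a ^ 2 * kpa m a ℓ ≠ 0 := by positivity
  have h2 := (hasDerivAt_const a m).div hden hdenne
  have : (fun a' => pfn m a' ℓ) = fun a' => m / (2 * a' ^ 2 * kpa m a' ℓ) := by
    funext a'; rw [pfn]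
  rw [this]
  refine h2.congr_deriv ?_
  have hkq : kpa m a ℓ ^ 2 * (m ^ 2 + 4 * a ^ 2 * ℓ) = m ^ 2 := by
    have := kpa_sq (a := a) hm hℓ
    have hq := q_pos (a := a) hm hℓ
    field_simp at this ⊢
    linarith
  rw [pfn]
  set k := kpa m a ℓ with hkdef
  have hkne : k ≠ 0 := hk.ne'
  have hmne : m ≠ 0 := hm.ne'
  have hane : a ≠ 0 := ha.ne'
  field_simp
  linear_combination 2 * hkq

end basics

lemma hasDerivAt_sqrtsq {y : ℝ} (hy : 1 < y) :
    HasDerivAt (fun y : ℝ => Real.sqrt (y ^ 2 - 1)) (y / Real.sqrt (y ^ 2 - 1)) y := by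
  have hy2 : (0:ℝ) < y ^ 2 - 1 := by nlinarith
  have hs : 0 < Real.sqrt (y ^ 2 - 1) := Real.sqrt_pos.2 hy2
  have h1 : HasDerivAt (fun y : ℝ => y ^ 2 - 1) (2 * y) y := by
    simpa using ((hasDerivAt_pow 2 y).sub_const 1)
  have h2 := (Real.hasDerivAt_sqrt hy2.ne').comp y h1
  refine h2.congr_deriv ?_
  field_simp

lemma hasDerivAt_logterm {y : ℝ} (hy : 1 < y) :
    HasDerivAt (fun y : ℝ => Real.log (y + Real.sqrt (y ^ 2 - 1)))
      (1 / Real.sqrt (y ^ 2 - 1)) y := by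
  have hy2 : (0:ℝ) < y ^ 2 - 1 := by nlinarith
  have hs : 0 < Real.sqrt (y ^ 2 - 1) := Real.sqrt_pos.2 hy2
  have hsq : Real.sqrt (y ^ 2 - 1) ^ 2 = y ^ 2 - 1 := Real.sq_sqrt hy2.le
  have h3 : HasDerivAt (fun y : ℝ => y + Real.sqrt (y ^ 2 - 1))
      (1 + y / Real.sqrt (y ^ 2 - 1)) y := (hasDerivAt_id y).add (hasDerivAt_sqrtsq hy)
  have hpos : 0 < y + Real.sqrt (y ^ 2 - 1) := by positivity
  have h4 := (Real.hasDerivAt_log hpos.ne').comp y h3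
  refine h4.congr_deriv ?_
  field_simp
  nlinarith [hsq, hs, hpos]

lemma contDiffAt_kpa (m ℓ : ℝ) (hm : 0 < m) (hℓ : 0 < ℓ) (a : ℝ) :
    ContDiffAt ℝ 1 (fun a' : ℝ => kpa m a' ℓ) a := by
  have hq : ∀ a' : ℝ, 0 < 1 + 4 * a' ^ 2 * ℓ / m ^ 2 := fun a' => by positivity
  have h1 : ContDiffAt ℝ 1 (fun a' : ℝ => 1 + 4 * a' ^ 2 * ℓ / m ^ 2) a := by
    have hm2 : (m:ℝ) ^ 2 ≠ 0 := by positivity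
    fun_prop (disch := assumption)
  have h2 : ContDiffAt ℝ 1 (fun a' : ℝ => Real.sqrt (1 + 4 * a' ^ 2 * ℓ / m ^ 2)) a :=
    (Real.contDiffAt_sqrt (hq a).ne').comp a h1
  have h3 := h2.inv (by
    have := Real.sqrt_pos.2 (hq a); exact this.ne')
  apply h3.congr_of_eventuallyEq
  filter_upwards with a'
  rw [kpa, one_div]
  rfl

lemma contDiffAt_pfn (m ℓ : ℝ) (hm : 0 < m) (hℓ : 0 < ℓ) {a : ℝ} (ha : 0 < a) :
    ContDiffAt ℝ 1 (fun a' : ℝ => pfn m a' ℓ) a := by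
  have hk : 0 < kpa m a ℓ := by
    have hq : (0:ℝ) < 1 + 4 * a ^ 2 * ℓ / m ^ 2 := by positivity
    have := Real.sqrt_pos.2 hq
    simp only [kpa]; positivity
  have h1 : ContDiffAt ℝ 1 (fun a' : ℝ => 2 * a' ^ 2 * kpa m a' ℓ) a := by
    have : ContDiffAt ℝ 1 (fun a' : ℝ => 2 * a' ^ 2) a := by fun_prop
    exact this.mul (contDiffAt_kpa m ℓ hm hℓ a)
  have h2 := (contDiffAt_const (c := m)).div h1 (by positivity)
  apply h2.congr_of_eventuallyEq
  filter_upwards with a'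
  rw [pfn]
  rfl


open ContinuousLinearMap in
lemma keyH (m a ℓ b : ℝ) (hm : 0 < m) (ha : 0 < a) (hℓ : 0 < ℓ) (hb : 0 < b) :
    HasDerivAt (fun x => Hf (kpa m a ℓ) (x / pfn m a ℓ))
      (pfn m a ℓ * (Hf (kpa m a ℓ) (b / pfn m a ℓ) - kpa m a ℓ) /
        Real.sqrt (Hf (kpa m a ℓ) (b / pfn m a ℓ) ^ 2 - 1))⁻¹ b ∧
    HasDerivAt (fun a' => Hf (kpa m a' ℓ) (b / pfn m a' ℓ))
      (-((-pfn m a ℓ * (1 + kpa m a ℓ ^ 2) / a) * (b / pfn m a ℓ) -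
          pfn m a ℓ * (-4 * a * ℓ * kpa m a ℓ ^ 3 / m ^ 2) *
            Real.log (Hf (kpa m a ℓ) (b / pfn m a ℓ) +
              Real.sqrt (Hf (kpa m a ℓ) (b / pfn m a ℓ) ^ 2 - 1))) /
        (pfn m a ℓ * (Hf (kpa m a ℓ) (b / pfn m a ℓ) - kpa m a ℓ) /
          Real.sqrt (Hf (kpa m a ℓ) (b / pfn m a ℓ) ^ 2 - 1))) a := by
  have hκ0 : 0 < kpa m a ℓ := kpa_pos hm hℓ
  have hκ1 : kpa m a ℓ < 1 := kpa_lt_one hm ha.ne' hℓ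
  have hp : 0 < pfn m a ℓ := pfn_pos hm ha hℓ
  have hx : 0 < b / pfn m a ℓ := by positivity
  set κ := kpa m a ℓ with hκdef
  set p := pfn m a ℓ with hpdef
  set y := Hf κ (b / p) with hydef
  have hy1 : 1 < y := Hf_gt_one hκ0.le hκ1 hx
  have hy2 : (0:ℝ) < y ^ 2 - 1 := by nlinarith
  have hs : 0 < Real.sqrt (y ^ 2 - 1) := Real.sqrt_pos.2 hy2
  have hGy : Gf κ y = b / p := Gf_Hf hκ0.le hκ1 hx.le
  set p' := -p * (1 + κ ^ 2) / a with hp'def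
  set κ' := -4 * a * ℓ * κ ^ 3 / m ^ 2 with hκ'def
  set s := Real.sqrt (y ^ 2 - 1) with hsdef
  set A : ℝ := p' * (b / p) - p * κ' * Real.log (y + s) with hAdef
  set B : ℝ := p * (y - κ) / s with hBdef
  have hB : 0 < B := by
    rw [hBdef]
    have : (0:ℝ) < y - κ := by linarith
    positivity
  -- the map φ and its derivative
  set φ : ℝ × ℝ → ℝ × ℝ :=
    fun z => (z.1, pfn m z.1 ℓ * Gf (kpa m z.1 ℓ) z.2) with hφdef
  set z₀ : ℝ × ℝ := (a, y) with hz₀def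
  set Lmap : ℝ × ℝ →L[ℝ] ℝ × ℝ :=
    (fst ℝ ℝ ℝ).prod (A • fst ℝ ℝ ℝ + B • snd ℝ ℝ ℝ) with hLmapdef
  set Linv : ℝ × ℝ →L[ℝ] ℝ × ℝ :=
    (fst ℝ ℝ ℝ).prod ((-A / B) • fst ℝ ℝ ℝ + B⁻¹ • snd ℝ ℝ ℝ) with hLinvdef
  have hleft : Function.LeftInverse Linv Lmap := by
    intro z
    simp only [hLmapdef, hLinvdef, ContinuousLinearMap.prod_apply,
      ContinuousLinearMap.add_apply, ContinuousLinearMap.smul_apply,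
      ContinuousLinearMap.coe_fst', ContinuousLinearMap.coe_snd', smul_eq_mul]
    ext
    · rfl
    · show -A / B * z.1 + B⁻¹ * (A * z.1 + B * z.2) = z.2
      field_simp
      ring
  have hright : Function.RightInverse Linv Lmap := by
    intro z
    simp only [hLmapdef, hLinvdef, ContinuousLinearMap.prod_apply,
      ContinuousLinearMap.add_apply, ContinuousLinearMap.smul_apply,
      ContinuousLinearMap.coe_fst', ContinuousLinearMap.coe_snd', smul_eq_mul]
    ext
    · rfl
    · show A * z.1 + B * (-A / B * z.1 + B⁻¹ * z.2) = z.2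
      field_simp
      ring
  set Leq : (ℝ × ℝ) ≃L[ℝ] (ℝ × ℝ) :=
    ContinuousLinearEquiv.equivOfInverse Lmap Linv hleft hright with hLeqdef
  -- HasFDerivAt φ Lmap z₀
  have hf1 : HasFDerivAt (fun z : ℝ × ℝ => pfn m z.1 ℓ) (p' • fst ℝ ℝ ℝ) z₀ :=
    (hasDerivAt_pfn hm hℓ ha).comp_hasFDerivAt (f := Prod.fst) z₀ hasFDerivAt_fst
  have hf2 : HasFDerivAt (fun z : ℝ × ℝ => kpa m z.1 ℓ) (κ' • fst ℝ ℝ ℝ) z₀ :=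
    (hasDerivAt_kpa hm hℓ a).comp_hasFDerivAt (f := Prod.fst) z₀ hasFDerivAt_fst
  have hf3 : HasFDerivAt (fun z : ℝ × ℝ => Real.sqrt (z.2 ^ 2 - 1))
      ((y / s) • snd ℝ ℝ ℝ) z₀ :=
    (hasDerivAt_sqrtsq hy1).comp_hasFDerivAt (f := Prod.snd) z₀ hasFDerivAt_snd
  have hf4 : HasFDerivAt (fun z : ℝ × ℝ => Real.log (z.2 + Real.sqrt (z.2 ^ 2 - 1)))
      ((1 / s) • snd ℝ ℝ ℝ) z₀ :=
    (hasDerivAt_logterm hy1).comp_hasFDerivAt (f := Prod.snd) z₀ hasFDerivAt_snd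
  have hgG : HasFDerivAt (fun z : ℝ × ℝ => Gf (kpa m z.1 ℓ) z.2)
      (((y / s) • snd ℝ ℝ ℝ) - (κ • ((1 / s) • snd ℝ ℝ ℝ)
        + Real.log (y + s) • (κ' • fst ℝ ℝ ℝ))) z₀ := by
    have := hf3.sub (hf2.mul hf4)
    exact this
  have hφL' := hf1.mul hgG
  have hφpre := HasFDerivAt.prodMk hasFDerivAt_fst hφL'
  have hφ : HasFDerivAt φ Lmap z₀ := by
    refine hφpre.congr_fderiv ?_
    refine ContinuousLinearMap.ext fun z => ?_
    have hz₀1 : z₀.1 = a := rfl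
    have hz₀2 : z₀.2 = y := rfl
    simp only [ContinuousLinearMap.prod_apply, ContinuousLinearMap.add_apply,
      ContinuousLinearMap.smul_apply, ContinuousLinearMap.coe_fst',
      ContinuousLinearMap.coe_snd', ContinuousLinearMap.sub_apply, smul_eq_mul,
      hz₀1, hz₀2, hGy, Prod.mk.injEq, hLmapdef]
    refine ⟨trivial, ?_⟩
    rw [hAdef, hBdef, hpdef]
    have hpne : pfn m a ℓ ≠ 0 := hp.ne'
    have hsne : s ≠ 0 := hs.ne'
    rw [show Gf (kpa m a ℓ) y = b / pfn m a ℓ from hGy]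
    field_simp
    ring
  -- smoothness of φ
  have hcd : ContDiffAt ℝ 1 φ z₀ := by
    have hK : ContDiffAt ℝ 1 (fun z : ℝ × ℝ => kpa m z.1 ℓ) z₀ :=
      (contDiffAt_kpa m ℓ hm hℓ a).comp (f := Prod.fst) z₀ contDiffAt_fst
    have hP : ContDiffAt ℝ 1 (fun z : ℝ × ℝ => pfn m z.1 ℓ) z₀ :=
      (contDiffAt_pfn m ℓ hm hℓ ha).comp (f := Prod.fst) z₀ contDiffAt_fst
    have hSin : ContDiffAt ℝ 1 (fun z : ℝ × ℝ => z.2 ^ 2 - 1) z₀ := by fun_prop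
    have hS : ContDiffAt ℝ 1 (fun z : ℝ × ℝ => Real.sqrt (z.2 ^ 2 - 1)) z₀ :=
      (Real.contDiffAt_sqrt hy2.ne').comp z₀ hSin
    have hLg : ContDiffAt ℝ 1
        (fun z : ℝ × ℝ => Real.log (z.2 + Real.sqrt (z.2 ^ 2 - 1))) z₀ := by
      apply ContDiffAt.log (contDiffAt_snd.add hS)
      show y + Real.sqrt (y ^ 2 - 1) ≠ 0
      have := Real.sqrt_nonneg (y ^ 2 - 1)
      positivity
    have hG2 : ContDiffAt ℝ 1 (fun z : ℝ × ℝ => Gf (kpa m z.1 ℓ) z.2) z₀ :=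
      hS.sub (hK.mul hLg)
    exact contDiffAt_fst.prodMk (hP.mul hG2)
  have hcoe : (Leq : ℝ × ℝ →L[ℝ] ℝ × ℝ) = Lmap := rfl
  have hstrict : HasStrictFDerivAt φ (Leq : ℝ × ℝ →L[ℝ] ℝ × ℝ) z₀ :=
    hcd.hasStrictFDerivAt' (hcoe ▸ hφ) one_ne_zero
  set ψ : ℝ × ℝ → ℝ × ℝ := hstrict.localInverse φ Leq z₀ with hψdef
  have hφz₀ : φ z₀ = (a, b) := by
    show (a, pfn m a ℓ * Gf (kpa m a ℓ) y) = (a, b)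
    have : pfn m a ℓ * Gf (kpa m a ℓ) y = b := by
      rw [show Gf (kpa m a ℓ) y = b / p from hGy, hpdef]
      field_simp
      exact div_self hp.ne'
    rw [this]
  have hψz₀ : ψ (a, b) = z₀ := by
    rw [← hφz₀]; exact hstrict.localInverse_apply_image
  have hψd : HasStrictFDerivAt ψ
      (Leq.symm : ℝ × ℝ →L[ℝ] ℝ × ℝ) (a, b) := by
    rw [← hφz₀]; exact hstrict.to_localInverse
  have hψcont : ContinuousAt ψ (a, b) := hψd.continuousAt
  have hev : ∀ᶠ w in nhds (a, b), φ (ψ w) = w := by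
    rw [← hφz₀]; exact hstrict.eventually_right_inverse
  have h1 : ∀ᶠ w : ℝ × ℝ in nhds (a, b), 0 < w.1 :=
    (continuous_fst.tendsto (a, b)).eventually (eventually_gt_nhds ha)
  have h2 : ∀ᶠ w : ℝ × ℝ in nhds (a, b), 1 < (ψ w).2 := by
    have ht : Filter.Tendsto (fun w => (ψ w).2) (nhds (a, b)) (nhds y) := by
      have h0 := hψcont.tendsto
      rw [hψz₀] at h0
      have := (continuous_snd.tendsto z₀).comp h0
      exact this
    exact ht.eventually (eventually_gt_nhds hy1)
  have hevH : ∀ᶠ w : ℝ × ℝ in nhds (a, b),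
      Hf (kpa m w.1 ℓ) (w.2 / pfn m w.1 ℓ) = (ψ w).2 := by
    filter_upwards [hev, h1, h2] with w hw hw1 hw2
    have hwp : 0 < pfn m w.1 ℓ := pfn_pos hm hw1 hℓ
    have h1' : (ψ w).1 = w.1 := by
      have h := congrArg Prod.fst hw
      rw [hφdef] at h
      simpa using h
    have heq : pfn m w.1 ℓ * Gf (kpa m w.1 ℓ) (ψ w).2 = w.2 := by
      have h2' := congrArg Prod.snd hw
      rw [hφdef] at h2'
      simp only at h2'
      rwa [h1'] at h2'
    have hdiv : w.2 / pfn m w.1 ℓ = Gf (kpa m w.1 ℓ) (ψ w).2 := by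
      rw [← heq]; field_simp
    rw [hdiv, Hf_Gf (kpa_lt_one hm hw1.ne' hℓ) hw2.le]
  have hψfd := hψd.hasFDerivAt
  have hsnd : HasFDerivAt (fun w : ℝ × ℝ => (ψ w).2)
      ((snd ℝ ℝ ℝ).comp (Leq.symm : ℝ × ℝ →L[ℝ] ℝ × ℝ)) (a, b) :=
    ((snd ℝ ℝ ℝ).hasFDerivAt).comp (a, b) hψfd
  have hH : HasFDerivAt (fun w : ℝ × ℝ => Hf (kpa m w.1 ℓ) (w.2 / pfn m w.1 ℓ))
      ((snd ℝ ℝ ℝ).comp (Leq.symm : ℝ × ℝ →L[ℝ] ℝ × ℝ)) (a, b) :=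
    hsnd.congr_of_eventuallyEq hevH
  have hsymm : (Leq.symm : ℝ × ℝ →L[ℝ] ℝ × ℝ) = Linv := rfl
  have hval1 : ((snd ℝ ℝ ℝ).comp (Leq.symm : ℝ × ℝ →L[ℝ] ℝ × ℝ)) ((0:ℝ), (1:ℝ)) = B⁻¹ := by
    rw [hsymm, hLinvdef]
    simp
  have hval2 : ((snd ℝ ℝ ℝ).comp (Leq.symm : ℝ × ℝ →L[ℝ] ℝ × ℝ)) ((1:ℝ), (0:ℝ)) = -A / B := by
    rw [hsymm, hLinvdef]
    simp
  constructor
  · have hline : HasDerivAt (fun x : ℝ => ((a, x) : ℝ × ℝ)) (0, 1) b :=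
      HasDerivAt.prodMk (hasDerivAt_const b a) (hasDerivAt_id b)
    have := hH.comp_hasDerivAt b hline
    rw [hval1] at this
    exact this
  · have hline : HasDerivAt (fun a' : ℝ => ((a', b) : ℝ × ℝ)) (1, 0) a :=
      HasDerivAt.prodMk (hasDerivAt_id a) (hasDerivAt_const a b)
    have := hH.comp_hasDerivAt a hline
    rw [hval2] at this
    exact this

/-- The common value of the θ-derivative of `R` at `b > 0`. -/
def DD (m a ℓ b : ℝ) : ℝ :=
  Real.sqrt (Hf (kpa m a ℓ) (b / pfn m a ℓ) ^ 2 - 1) /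
    (Hf (kpa m a ℓ) (b / pfn m a ℓ) - kpa m a ℓ)

lemma Rf_neg_arg (m θ a ℓ : ℝ) : Rf m (-θ) a ℓ = Rf m θ a ℓ := by
  rw [Rf, Rf, abs_neg]

lemma hasDerivAt_pfn_mul_kpa {m a ℓ : ℝ} (hm : 0 < m) (ha : 0 < a) (hℓ : 0 < ℓ) :
    HasDerivAt (fun a' => pfn m a' ℓ * kpa m a' ℓ) (-m / a ^ 3) a := by
  have hfe : (fun a' => pfn m a' ℓ * kpa m a' ℓ) = fun a' => m / (2 * a' ^ 2) := by
    funext a'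
    rcases eq_or_ne a' 0 with h | h
    · subst h; simp [pfn, kpa]
    · exact pfn_mul_kpa hm h hℓ
  rw [hfe]
  have h1 : HasDerivAt (fun a' : ℝ => 2 * a' ^ 2) (4 * a) a := by
    simpa using ((hasDerivAt_pow 2 a).const_mul 2).congr_deriv (by ring)
  have h2 := (hasDerivAt_const a m).div h1 (by positivity)
  refine h2.congr_deriv ?_
  field_simp
  ring

lemma main_pos {m a ℓ b : ℝ} (hm : 0 < m) (ha : 0 < a) (hℓ : 0 < ℓ) (hb : 0 < b) :
    HasDerivAt (fun θ' => Rf m θ' a ℓ) (DD m a ℓ b) b ∧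
    DD m a ℓ b = Vf m b a ℓ / a ∧
    DD m a ℓ b = (pfn m a ℓ / Rf m b a ℓ) *
      Real.sqrt ((Rf m b a ℓ / pfn m a ℓ + kpa m a ℓ) ^ 2 - 1) ∧
    HasDerivAt (fun a' => Rf m b a' ℓ)
      ((-pfn m a ℓ * (1 + kpa m a ℓ ^ 2) / a) *
          (Rf m b a ℓ / pfn m a ℓ + kpa m a ℓ - b / pfn m a ℓ * DD m a ℓ b) +
        pfn m a ℓ * (-4 * a * ℓ * kpa m a ℓ ^ 3 / m ^ 2) *
          acosh (Rf m b a ℓ / pfn m a ℓ + kpa m a ℓ) * DD m a ℓ b +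
        m / a ^ 3) a := by
  obtain ⟨hd1, hd2⟩ := keyH m a ℓ b hm ha hℓ hb
  have hκ0 : 0 < kpa m a ℓ := kpa_pos hm hℓ
  have hκ1 : kpa m a ℓ < 1 := kpa_lt_one hm ha.ne' hℓ
  have hp : 0 < pfn m a ℓ := pfn_pos hm ha hℓ
  have hx : 0 < b / pfn m a ℓ := by positivity
  set κ := kpa m a ℓ with hκdef
  set p := pfn m a ℓ with hpdef
  set y := Hf κ (b / p) with hydef
  have hy1 : 1 < y := Hf_gt_one hκ0.le hκ1 hx
  have hy2 : (0:ℝ) < y ^ 2 - 1 := by nlinarith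
  set s := Real.sqrt (y ^ 2 - 1) with hsdef
  have hs : 0 < s := Real.sqrt_pos.2 hy2
  have hs2 : s ^ 2 = y ^ 2 - 1 := Real.sq_sqrt hy2.le
  have hyκ : 0 < y - κ := by linarith
  have hR : Rf m b a ℓ = p * (y - κ) := by
    rw [Rf, abs_of_pos hb]; ring
  have hRpos : 0 < Rf m b a ℓ := by rw [hR]; positivity
  have hDD : DD m a ℓ b = s / (y - κ) := rfl
  have hRpκ : Rf m b a ℓ / p + κ = y := by
    rw [hR]; field_simp; ring
  have hder1 : HasDerivAt (fun θ' => Rf m θ' a ℓ) (DD m a ℓ b) b := by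
    have h := (hd1.const_mul p).sub_const (p * κ)
    have heq : (fun θ' : ℝ => Rf m θ' a ℓ) =ᶠ[nhds b]
        (fun x => p * Hf κ (x / p) - p * κ) := by
      filter_upwards [eventually_gt_nhds hb] with x hxx
      rw [Rf, abs_of_pos hxx]
    have h2 := h.congr_of_eventuallyEq heq
    refine h2.congr_deriv ?_
    rw [hDD]
    field_simp
  refine ⟨hder1, ?_, ?_, ?_⟩
  · -- DD = Vf / a
    have hmeq : m = 2 * a ^ 2 * p * κ := m_eq hm ha hℓ
    have hleq : ℓ = a ^ 2 * p ^ 2 * (1 - κ ^ 2) := ell_eq hm ha hℓ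
    have harg : 1 + m / (a ^ 2 * Rf m b a ℓ) - ℓ / (a ^ 2 * Rf m b a ℓ ^ 2)
        = (s / (y - κ)) ^ 2 := by
      rw [hR, div_pow, hs2]
      nth_rewrite 1 [hmeq]
      nth_rewrite 1 [hleq]
      field_simp
      ring
    rw [Vf, harg, Real.sqrt_sq (by positivity), Real.sign_of_pos hb, hDD]
    field_simp
  · rw [hRpκ, hDD, hR, ← hsdef]
    field_simp
  · -- a-derivative
    have hpa := hasDerivAt_pfn hm hℓ ha
    have hprod := hpa.mul hd2
    have hpk := hasDerivAt_pfn_mul_kpa hm ha hℓ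
    have htot := hprod.sub hpk
    have hfe : (fun a' => Rf m b a' ℓ) =
        fun a' => pfn m a' ℓ * Hf (kpa m a' ℓ) (b / pfn m a' ℓ) -
          pfn m a' ℓ * kpa m a' ℓ := by
      funext a'
      rw [Rf, abs_of_pos hb]
    rw [hfe]
    refine htot.congr_deriv ?_
    rw [hDD, hRpκ, acosh, ← hsdef]
    have hane : a ≠ 0 := ha.ne'
    field_simp
    ring
lemma hasDerivAt_Rf_zero {m a ℓ : ℝ} (hm : 0 < m) (ha : 0 < a) (hℓ : 0 < ℓ) :
    HasDerivAt (fun θ' => Rf m θ' a ℓ) 0 0 := by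
  have hκ0 : 0 < kpa m a ℓ := kpa_pos hm hℓ
  have hκ1 : kpa m a ℓ < 1 := kpa_lt_one hm ha.ne' hℓ
  have hp : 0 < pfn m a ℓ := pfn_pos hm ha hℓ
  set κ := kpa m a ℓ with hκdef
  set p := pfn m a ℓ with hpdef
  have h1κ : (0:ℝ) < 1 - κ := by linarith
  set C : ℝ := (p * (1 - κ) ^ 2)⁻¹ with hCdef
  have hC : 0 < C := by rw [hCdef]; positivity
  have hR0 : Rf m 0 a ℓ = p * 1 - p * κ := by
    rw [Rf]
    simp [Hf_zero hκ1, ← hpdef, ← hκdef]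
  rw [hasDerivAt_iff_tendsto_slope]
  apply squeeze_zero_norm' (a := fun θ : ℝ => C * |θ|)
  · filter_upwards [self_mem_nhdsWithin] with θ (hθ : θ ≠ 0)
    have ht : 0 < |θ| := abs_pos.2 hθ
    have hxp : 0 < |θ| / p := by positivity
    have hHge : 1 ≤ Hf κ (|θ| / p) := Hf_mem hκ0.le hκ1 hxp.le
    have hgap : Hf κ (|θ| / p) - 1 ≤ (|θ| / p / (1 - κ)) ^ 2 :=
      Hf_lt_one_gap hκ0.le hκ1 hxp.le
    have hdiff0 : 0 ≤ Rf m θ a ℓ - Rf m 0 a ℓ := by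
      rw [Rf, hR0]
      nlinarith [hHge]
    have hdiff1 : Rf m θ a ℓ - Rf m 0 a ℓ ≤ C * |θ| ^ 2 := by
      rw [Rf, hR0]
      have : p * Hf κ (|θ| / p) - p * 1 ≤ p * (|θ| / p / (1 - κ)) ^ 2 := by
        nlinarith [hgap]
      calc p * Hf κ (|θ| / p) - p * κ - (p * 1 - p * κ)
          = p * Hf κ (|θ| / p) - p * 1 := by ring
        _ ≤ p * (|θ| / p / (1 - κ)) ^ 2 := this
        _ = C * |θ| ^ 2 := by rw [hCdef]; field_simp
    rw [slope_def_field]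
    rw [Real.norm_eq_abs, abs_div, abs_of_nonneg (by simpa using hdiff0)]
    rw [sub_zero]
    rw [div_le_iff₀ ht]
    calc Rf m θ a ℓ - Rf m 0 a ℓ ≤ C * |θ| ^ 2 := hdiff1
      _ = C * |θ| * |θ| := by ring
  · have hcont : Filter.Tendsto (fun θ : ℝ => C * |θ|) (nhds 0) (nhds 0) := by
      have := (continuous_abs.tendsto (0:ℝ)).const_mul C
      simpa using this
    exact hcont.mono_left nhdsWithin_le_nhds

end helper

/-- identities for the first order derivatives of `p`, `κ`, `pκ` and `R` in the
variables `a` and `θ`. -/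
theorem statement8 (m : ℝ) (hm : 0 < m) (a ℓ : ℝ) (ha : 0 < a) (hℓ : 0 < ℓ) :
    deriv (fun a' => pfn m a' ℓ) a = -pfn m a ℓ * (1 + kpa m a ℓ ^ 2) / a ∧
    deriv (fun a' => kpa m a' ℓ) a = -4 * a * ℓ * kpa m a ℓ ^ 3 / m ^ 2 ∧
    deriv (fun a' => pfn m a' ℓ * kpa m a' ℓ) a = -m / a ^ 3 ∧
    (∀ θ : ℝ, deriv (fun θ' => Rf m θ' a ℓ) θ = Vf m θ a ℓ / a) ∧
    ∀ θ : ℝ, θ ≠ 0 →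
      deriv (fun θ' => Rf m θ' a ℓ) θ =
        Real.sign θ * (pfn m a ℓ / Rf m θ a ℓ) *
          Real.sqrt ((Rf m θ a ℓ / pfn m a ℓ + kpa m a ℓ) ^ 2 - 1) ∧
      deriv (fun a' => Rf m θ a' ℓ) a =
        deriv (fun a' => pfn m a' ℓ) a *
            (Rf m θ a ℓ / pfn m a ℓ + kpa m a ℓ -
              θ / pfn m a ℓ * deriv (fun θ' => Rf m θ' a ℓ) θ) +
          pfn m a ℓ * deriv (fun a' => kpa m a' ℓ) a *
            acosh (Rf m θ a ℓ / pfn m a ℓ + kpa m a ℓ) * Real.sign θ *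
            deriv (fun θ' => Rf m θ' a ℓ) θ +
          m / a ^ 3 := by
  have hκd := hasDerivAt_kpa hm hℓ a
  have hpd := hasDerivAt_pfn hm hℓ ha
  have hpκd := hasDerivAt_pfn_mul_kpa hm ha hℓ
  have negderiv : ∀ θ : ℝ, θ < 0 →
      HasDerivAt (fun θ' => Rf m θ' a ℓ) (-(DD m a ℓ (-θ))) θ := by
    intro θ h
    obtain ⟨hder, -, -, -⟩ := main_pos hm ha hℓ (neg_pos.2 h)
    have hcomp := hder.comp θ (hasDerivAt_neg θ)
    have hfun : ((fun θ'' => Rf m θ'' a ℓ) ∘ fun x : ℝ => -x) =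
        fun θ' => Rf m θ' a ℓ := by
      funext t; simp only [Function.comp]; exact Rf_neg_arg m t a ℓ
    rw [hfun] at hcomp
    refine hcomp.congr_deriv ?_
    ring
  refine ⟨hpd.deriv, hκd.deriv, hpκd.deriv, ?_, ?_⟩
  · intro θ
    rcases lt_trichotomy θ 0 with h | h | h
    · obtain ⟨-, hV, -, -⟩ := main_pos hm ha hℓ (neg_pos.2 h)
      rw [(negderiv θ h).deriv]
      have hVθ : Vf m θ a ℓ = -Vf m (-θ) a ℓ := by
        rw [Vf, Vf, Rf_neg_arg, Real.sign_of_neg h,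
          Real.sign_of_pos (neg_pos.2 h)]
        ring
      rw [hVθ, neg_div, ← hV]
    · subst h
      rw [(hasDerivAt_Rf_zero hm ha hℓ).deriv]
      simp [Vf]
    · obtain ⟨hder, hV, -, -⟩ := main_pos hm ha hℓ h
      rw [hder.deriv, hV]
  · intro θ hθ
    rcases hθ.lt_or_gt with h | h
    · obtain ⟨hder, hV, hsqrtid, hdera⟩ := main_pos hm ha hℓ (neg_pos.2 h)
      have hd := negderiv θ h
      constructor
      · rw [hd.deriv, Real.sign_of_neg h, ← Rf_neg_arg m θ a ℓ]
        linear_combination (-1 : ℝ) * hsqrtid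
      · rw [show (fun a' => Rf m θ a' ℓ) = fun a' => Rf m (-θ) a' ℓ from
          funext fun a' => (Rf_neg_arg m θ a' ℓ).symm]
        rw [hdera.deriv, hd.deriv, hpd.deriv, hκd.deriv, Real.sign_of_neg h,
          ← Rf_neg_arg m θ a ℓ]
        ring
    · obtain ⟨hder, hV, hsqrtid, hdera⟩ := main_pos hm ha hℓ h
      constructor
      · rw [hder.deriv, Real.sign_of_pos h, hsqrtid]
        ring
      · rw [hdera.deriv, hder.deriv, hpd.deriv, hκd.deriv, Real.sign_of_pos h]
        ring
end
end
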